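/- arXiv:2505.06214 — 4 statements merged into one kernel-verified Lean document; each statement's English description precedes it below -/
import Mathlib

section
/- Let p > -1 and for t > 0 define I_p(t) = ∫₀¹ (1 + r²)^{-t} r^p dr. Then there exist constants c₁ > 0, c₂ > 0 and T > 0 such that for all t ≥ T one has c₁ t^{-(p+1)/2} ≤ I_p(t) ≤ c₂ t^{-(p+1)/2}. -/
/-!
On `[0, 1]` we have `x / 2 ≤ log (1 + x) ≤ x`, so `exp (-t r²) ≤ (1 + r²)^(-t) ≤ exp (-t r² / 2)`.
The upper bound is dominated by the Gamma integral `∫₀^∞ r^p exp (-t r² / 2) dr`, which scales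
like `t^(-(p+1)/2)`. For the lower bound, on `(0, t^(-1/2))` the factor `(1 + r²)^(-t)` is at least
`exp (-1)`, and `∫₀^(t^(-1/2)) r^p dr = t^(-(p+1)/2) / (p + 1)`.
-/

open MeasureTheory Real Set

lemma half_le_log_one_add {x : ℝ} (h0 : 0 ≤ x) (h1 : x ≤ 1) : x / 2 ≤ log (1 + x) :=
  calc x / 2 ≤ 2 * x / (x + 2) := by rw [le_div_iff₀ (by linarith)]; nlinarith
    _ ≤ log (1 + x) := le_log_one_add_of_nonneg h0

lemma one_add_rpow_neg_le_exp {x t : ℝ} (h0 : 0 ≤ x) (h1 : x ≤ 1) (ht : 0 ≤ t) :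
    (1 + x) ^ (-t) ≤ exp (-(t / 2) * x) := by
  rw [rpow_def_of_pos (by linarith), exp_le_exp]
  nlinarith [half_le_log_one_add h0 h1]

lemma exp_neg_mul_le_one_add_rpow_neg {x t : ℝ} (hx : -1 < x) (ht : 0 ≤ t) :
    exp (-(t * x)) ≤ (1 + x) ^ (-t) := by
  rw [rpow_def_of_pos (by linarith), exp_le_exp]
  nlinarith [log_le_sub_one_of_pos (show 0 < 1 + x by linarith)]

section
variable {p t : ℝ}

lemma integrableOn_one_add_sq_rpow_neg_mul_rpow (hp : -1 < p) (ht : 0 ≤ t) :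
    IntegrableOn (fun r : ℝ => (1 + r ^ 2) ^ (-t) * r ^ p) (Ioo 0 1) := by
  refine Integrable.mono' (((intervalIntegral.intervalIntegrable_rpow' hp).1).mono_set
    Ioo_subset_Ioc_self) (by fun_prop) ((ae_restrict_iff' measurableSet_Ioo).2 (ae_of_all _ ?_))
  intro r hr
  have hrp : 0 ≤ r ^ p := rpow_nonneg hr.1.le p
  rw [norm_of_nonneg (by positivity)]
  exact mul_le_of_le_one_left hrp
    (rpow_le_one_of_one_le_of_nonpos (by nlinarith) (neg_nonpos.2 ht))

lemma setIntegral_one_add_sq_rpow_neg_mul_rpow_le (hp : -1 < p) (ht : 0 < t) :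
    ∫ r in Ioo (0 : ℝ) 1, (1 + r ^ 2) ^ (-t) * r ^ p ≤
      2 ^ ((p + 1) / 2) * (1 / 2) * Gamma ((p + 1) / 2) * t ^ (-(p + 1) / 2) := by
  have hg := integrableOn_rpow_mul_exp_neg_mul_sq (half_pos ht) hp
  calc ∫ r in Ioo (0 : ℝ) 1, (1 + r ^ 2) ^ (-t) * r ^ p
      ≤ ∫ r in Ioo (0 : ℝ) 1, r ^ p * exp (-(t / 2) * r ^ 2) := by
        refine setIntegral_mono_on (integrableOn_one_add_sq_rpow_neg_mul_rpow hp ht.le)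
          (hg.mono_set Ioo_subset_Ioi_self) measurableSet_Ioo fun r ⟨hr0, hr1⟩ => ?_
        rw [mul_comm]
        exact mul_le_mul_of_nonneg_left
          (one_add_rpow_neg_le_exp (sq_nonneg r) (by nlinarith) ht.le) (rpow_nonneg hr0.le p)
    _ ≤ ∫ r in Ioi (0 : ℝ), r ^ p * exp (-(t / 2) * r ^ 2) := by
        refine setIntegral_mono_set hg ?_ Ioo_subset_Ioi_self.eventuallyLE
        exact (ae_restrict_iff' measurableSet_Ioi).2
          (ae_of_all _ fun r (hr : 0 < r) => by positivity)
    _ = (t / 2) ^ (-(p + 1) / 2) * (1 / 2) * Gamma ((p + 1) / 2) := by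
        simpa only [rpow_two] using integral_rpow_mul_exp_neg_mul_rpow two_pos hp (half_pos ht)
    _ = 2 ^ ((p + 1) / 2) * (1 / 2) * Gamma ((p + 1) / 2) * t ^ (-(p + 1) / 2) := by
        rw [div_rpow ht.le zero_le_two, div_eq_mul_inv _ ((2 : ℝ) ^ _), ← rpow_neg zero_le_two,
          show -(-(p + 1) / 2) = (p + 1) / 2 by ring]
        ring

lemma le_setIntegral_one_add_sq_rpow_neg_mul_rpow (hp : -1 < p) (ht : 1 ≤ t) :
    exp (-1) / (p + 1) * t ^ (-(p + 1) / 2) ≤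
      ∫ r in Ioo (0 : ℝ) 1, (1 + r ^ 2) ^ (-t) * r ^ p := by
  have ht0 : 0 < t := one_pos.trans_le ht
  set ε : ℝ := t ^ (-(1 / 2) : ℝ) with hε
  have hε0 : 0 < ε := rpow_pos_of_pos ht0 _
  have hε1 : ε ≤ 1 := rpow_le_one_of_one_le_of_nonpos ht (by norm_num)
  have hε_sq : t * ε ^ 2 = 1 := by
    rw [hε, ← rpow_natCast, ← rpow_mul ht0.le]
    norm_num [rpow_neg_one, ht0.ne']
  have hf := integrableOn_one_add_sq_rpow_neg_mul_rpow hp ht0.le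
  calc exp (-1) / (p + 1) * t ^ (-(p + 1) / 2)
      = ∫ r in Ioo (0 : ℝ) ε, exp (-1) * r ^ p := by
        rw [integral_const_mul, ← integral_Ioc_eq_integral_Ioo,
          ← intervalIntegral.integral_of_le hε0.le, integral_rpow (Or.inl hp),
          zero_rpow (by linarith), hε, ← rpow_mul ht0.le]
        ring_nf
    _ ≤ ∫ r in Ioo (0 : ℝ) ε, (1 + r ^ 2) ^ (-t) * r ^ p := by
        refine setIntegral_mono_on
          ((((intervalIntegral.intervalIntegrable_rpow' hp).1).mono_set
            Ioo_subset_Ioc_self).const_mul _)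
          (hf.mono_set (Ioo_subset_Ioo_right hε1)) measurableSet_Ioo fun r ⟨hr0, hrε⟩ => ?_
        have htr : t * r ^ 2 ≤ 1 := hε_sq ▸ by gcongr
        refine mul_le_mul_of_nonneg_right ?_ (rpow_nonneg hr0.le p)
        calc exp (-1) ≤ exp (-(t * r ^ 2)) := exp_le_exp.2 (by linarith)
          _ ≤ (1 + r ^ 2) ^ (-t) := exp_neg_mul_le_one_add_rpow_neg
            (neg_one_lt_zero.trans_le (sq_nonneg r)) ht0.le
    _ ≤ ∫ r in Ioo (0 : ℝ) 1, (1 + r ^ 2) ^ (-t) * r ^ p := by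
        refine setIntegral_mono_set hf ?_ (Ioo_subset_Ioo_right hε1).eventuallyLE
        refine (ae_restrict_iff' measurableSet_Ioo).2
          (ae_of_all _ fun r ⟨(hr : 0 < r), _⟩ => ?_)
        show 0 ≤ (1 + r ^ 2) ^ (-t) * r ^ p
        positivity

end

/-- Lemma 2.1: two-sided asymptotic estimate for `I_p(t) = ∫₀¹ (1+r²)^{-t} r^p dr`. -/
theorem stmt_0 (p : ℝ) (hp : -1 < p) :
    ∃ c₁ c₂ T : ℝ, 0 < c₁ ∧ 0 < c₂ ∧ 0 < T ∧
      ∀ t : ℝ, T ≤ t →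
        c₁ * t ^ (-(p + 1) / 2) ≤ (∫ r in Set.Ioo (0 : ℝ) 1, (1 + r ^ 2) ^ (-t) * r ^ p) ∧
        (∫ r in Set.Ioo (0 : ℝ) 1, (1 + r ^ 2) ^ (-t) * r ^ p) ≤ c₂ * t ^ (-(p + 1) / 2) := by
  have hp1 : 0 < p + 1 := by linarith
  have hΓ : 0 < Gamma ((p + 1) / 2) := Gamma_pos_of_pos (by linarith)
  refine ⟨exp (-1) / (p + 1), 2 ^ ((p + 1) / 2) * (1 / 2) * Gamma ((p + 1) / 2), 1,
    by positivity, by positivity, one_pos, fun t ht => ⟨?_, ?_⟩⟩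
  · exact le_setIntegral_one_add_sq_rpow_neg_mul_rpow hp ht
  · exact setIntegral_one_add_sq_rpow_neg_mul_rpow_le hp (one_pos.trans_le ht)
end

section
/- Let p > -1 and for t > 1 define J_p(t) = ∫₁^∞ (1 + r²)^{-t} r^p dr. Then there exist constants c₁ > 0, c₂ > 0 and T > 1 such that for all t ≥ T one has c₁ · 2^{-t}/(t - 1) ≤ J_p(t) ≤ c₂ · 2^{-t}/(t - 1). -/
open MeasureTheory

lemma aux_int (a : ℝ) (ha : a < -1) :
    ∫ r in Set.Ioi (1 : ℝ), r ^ a = 1 / (-a - 1) := by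
  rw [integral_Ioi_rpow_of_lt ha one_pos, Real.one_rpow,
    div_eq_div_iff (ne_of_lt (by linarith : a + 1 < 0)) (ne_of_gt (by linarith : (0:ℝ) < -a - 1))]
  ring

lemma aux_intble (a : ℝ) (ha : a < -1) :
    IntegrableOn (fun r : ℝ => r ^ a) (Set.Ioi (1 : ℝ)) :=
  integrableOn_Ioi_rpow_of_lt ha one_pos

-- pointwise upper bound on Ioi 1
lemma aux_upper (p t r : ℝ) (hr : 1 < r) (ht : 0 ≤ t) :
    (1 + r ^ 2) ^ (-t) * r ^ p ≤ 2 ^ (-t) * r ^ (p - t) := by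
  have hr0 : 0 < r := lt_trans one_pos hr
  have h2r : (0:ℝ) < 2 * r := by linarith
  have hle : 2 * r ≤ 1 + r ^ 2 := by nlinarith
  have h1 : (1 + r ^ 2) ^ (-t) ≤ (2 * r) ^ (-t) :=
    Real.rpow_le_rpow_of_nonpos h2r hle (by linarith)
  have h2 : (2 * r) ^ (-t) = 2 ^ (-t) * r ^ (-t) :=
    Real.mul_rpow (by norm_num) hr0.le
  calc (1 + r ^ 2) ^ (-t) * r ^ p ≤ (2 * r) ^ (-t) * r ^ p := by
        apply mul_le_mul_of_nonneg_right h1 (Real.rpow_nonneg hr0.le p)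
    _ = 2 ^ (-t) * r ^ (p - t) := by
        rw [h2, mul_assoc, ← Real.rpow_add hr0]
        ring_nf

-- pointwise lower bound on Ioi 1
lemma aux_lower (p t r : ℝ) (hr : 1 < r) (ht : 0 ≤ t) :
    2 ^ (-t) * r ^ (p - 2 * t) ≤ (1 + r ^ 2) ^ (-t) * r ^ p := by
  have hr0 : 0 < r := lt_trans one_pos hr
  have hpos : (0:ℝ) < 1 + r ^ 2 := by positivity
  have hle : 1 + r ^ 2 ≤ 2 * r ^ 2 := by nlinarith
  have h1 : (2 * r ^ 2) ^ (-t) ≤ (1 + r ^ 2) ^ (-t) :=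
    Real.rpow_le_rpow_of_nonpos hpos hle (by linarith)
  have h2 : (2 * r ^ 2 : ℝ) ^ (-t) = 2 ^ (-t) * r ^ (-(2 * t)) := by
    rw [Real.mul_rpow (by norm_num) (by positivity)]
    congr 1
    rw [← Real.rpow_natCast r 2, ← Real.rpow_mul hr0.le]
    norm_num
  calc 2 ^ (-t) * r ^ (p - 2 * t) = (2 * r ^ 2) ^ (-t) * r ^ p := by
        rw [h2, mul_assoc, ← Real.rpow_add hr0]
        ring_nf
    _ ≤ (1 + r ^ 2) ^ (-t) * r ^ p := by
        apply mul_le_mul_of_nonneg_right h1 (Real.rpow_nonneg hr0.le p)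

/-- Lemma 2.2: two-sided asymptotic estimate for `J_p(t) = ∫₁^∞ (1+r²)^{-t} r^p dr`. -/
theorem stmt_1 (p : ℝ) (hp : -1 < p) :
    ∃ c₁ c₂ T : ℝ, 0 < c₁ ∧ 0 < c₂ ∧ 1 < T ∧
      ∀ t : ℝ, T ≤ t →
        c₁ * ((2 : ℝ) ^ (-t) / (t - 1)) ≤ (∫ r in Set.Ioi (1 : ℝ), (1 + r ^ 2) ^ (-t) * r ^ p) ∧
        (∫ r in Set.Ioi (1 : ℝ), (1 + r ^ 2) ^ (-t) * r ^ p) ≤ c₂ * ((2 : ℝ) ^ (-t) / (t - 1)) := by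
  have habs1 : p ≤ |p| := le_abs_self p
  have habs2 : -|p| ≤ p := neg_abs_le p
  have habs0 : 0 ≤ |p| := abs_nonneg p
  refine ⟨1/4, 2, 3 + 2 * |p|, by norm_num, by norm_num, by linarith, ?_⟩
  intro t ht
  have ht0 : 0 ≤ t := by linarith
  have h1t : p - t < -1 := by linarith
  have h2t : p - 2 * t < -1 := by linarith
  have hA : (0:ℝ) < 2 ^ (-t) := Real.rpow_pos_of_pos two_pos _
  -- comparison functions
  set g₁ : ℝ → ℝ := fun r => 2 ^ (-t) * r ^ (p - 2 * t) with hg₁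
  set g₂ : ℝ → ℝ := fun r => 2 ^ (-t) * r ^ (p - t) with hg₂
  have hig₁ : IntegrableOn g₁ (Set.Ioi (1:ℝ)) := (aux_intble _ h2t).const_mul _
  have hig₂ : IntegrableOn g₂ (Set.Ioi (1:ℝ)) := (aux_intble _ h1t).const_mul _
  -- measurability of the main integrand
  have hmeas : AEStronglyMeasurable (fun r : ℝ => (1 + r ^ 2) ^ (-t) * r ^ p)
      (volume.restrict (Set.Ioi (1:ℝ))) := by
    apply ContinuousOn.aestronglyMeasurable _ measurableSet_Ioi
    apply ContinuousOn.mul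
    · apply ContinuousOn.rpow_const (by fun_prop)
      intro x hx
      left; positivity
    · apply ContinuousOn.rpow_const continuousOn_id
      intro x hx
      left
      exact ne_of_gt (lt_trans one_pos hx)
  -- integrability of the main integrand
  have hif : IntegrableOn (fun r : ℝ => (1 + r ^ 2) ^ (-t) * r ^ p) (Set.Ioi (1:ℝ)) := by
    apply Integrable.mono' hig₂ hmeas
    filter_upwards [ae_restrict_mem measurableSet_Ioi] with r hr
    have hr' : (1:ℝ) < r := hr
    have h0 : 0 ≤ (1 + r ^ 2) ^ (-t) * r ^ p := by positivity
    rw [Real.norm_eq_abs, abs_of_nonneg h0]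
    exact aux_upper p t r hr' ht0
  -- the two integral comparisons
  have hlow : ∫ r in Set.Ioi (1:ℝ), g₁ r ≤ ∫ r in Set.Ioi (1:ℝ), (1 + r ^ 2) ^ (-t) * r ^ p := by
    apply setIntegral_mono_on hig₁ hif measurableSet_Ioi
    intro r hr
    exact aux_lower p t r hr ht0
  have hupp : ∫ r in Set.Ioi (1:ℝ), (1 + r ^ 2) ^ (-t) * r ^ p ≤ ∫ r in Set.Ioi (1:ℝ), g₂ r := by
    apply setIntegral_mono_on hif hig₂ measurableSet_Ioi
    intro r hr
    exact aux_upper p t r hr ht0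
  -- compute the comparison integrals
  have hvg₁ : ∫ r in Set.Ioi (1:ℝ), g₁ r = 2 ^ (-t) * (1 / (2 * t - p - 1)) := by
    rw [hg₁]
    rw [integral_const_mul, aux_int _ h2t]
    ring_nf
  have hvg₂ : ∫ r in Set.Ioi (1:ℝ), g₂ r = 2 ^ (-t) * (1 / (t - p - 1)) := by
    rw [hg₂]
    rw [integral_const_mul, aux_int _ h1t]
    ring_nf
  constructor
  · refine le_trans ?_ hlow
    rw [hvg₁]
    have hd1 : (0:ℝ) < t - 1 := by linarith
    have hd2 : (0:ℝ) < 2 * t - p - 1 := by linarith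
    calc (1/4 : ℝ) * (2 ^ (-t) / (t - 1)) = 2 ^ (-t) * ((1/4) / (t - 1)) := by ring
        _ ≤ 2 ^ (-t) * (1 / (2 * t - p - 1)) := by
            apply mul_le_mul_of_nonneg_left _ hA.le
            rw [div_le_div_iff₀ hd1 hd2]
            nlinarith
  · refine le_trans hupp ?_
    rw [hvg₂]
    have hd1 : (0:ℝ) < t - 1 := by linarith
    have hd2 : (0:ℝ) < t - p - 1 := by linarith
    calc 2 ^ (-t) * (1 / (t - p - 1)) ≤ 2 ^ (-t) * (2 / (t - 1)) := by
          apply mul_le_mul_of_nonneg_left _ hA.le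
          rw [div_le_div_iff₀ hd2 hd1]
          nlinarith
      _ = 2 * (2 ^ (-t) / (t - 1)) := by ring
end

section
/- For every ξ ∈ ℝ^N and all complex numbers u, v, setting E₀ = (1/2)|v|² + (1/8) log²(1 + |ξ|²)|u|² + (π²/8)|u|² and E = E₀ + ρ(ξ) Re(v · conj(u)) + ρ(ξ) log(1 + |ξ|²) |u|²/2, one has (1/2) E₀ ≤ E ≤ (9/4) E₀. -/
open MeasureTheory

/-- The weight function ρ from the paper. -/
noncomputable def rho {N : ℕ} (ξ : EuclideanSpace ℝ (Fin N)) : ℝ :=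
  if ‖ξ‖ ≤ Real.sqrt (Real.exp (Real.pi / Real.sqrt 3) - 1) then
    (1 / 4) * Real.log (1 + ‖ξ‖ ^ 2)
  else
    (1 / 16) * ((Real.log (1 + ‖ξ‖ ^ 2)) ^ 2 + Real.pi ^ 2) / Real.log (1 + ‖ξ‖ ^ 2)

/-!
Write `L = log (1 + |ξ|²)`, `s = √(L² + π²)`, `a = |v|` and `b = s |u|`, so that
`E₀ = a²/2 + b²/8`. Both branches of `ρ` satisfy `0 ≤ ρ ≤ s/4` (the threshold on `|ξ|` is
exactly `L = π/√3`, beyond which `π² < 3L²`), and `L ≤ s`. Hence the cross term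
`ρ Re(v ū)` is at most `ab/4` in absolute value and the last term lies in `[0, b²/8]`; the
two inequalities then follow from the squares `(a/2 - b/4)² ≥ 0` and `(2a - b/2)² ≥ 0`.
-/

open Real

theorem half_le_add_add_le_nine_div_four_mul {a b y z : ℝ} (hy : |y| ≤ a * b / 4) (hz₀ : 0 ≤ z)
    (hz : z ≤ b ^ 2 / 8) :
    (1 / 2) * (a ^ 2 / 2 + b ^ 2 / 8) ≤ a ^ 2 / 2 + b ^ 2 / 8 + y + z ∧
      a ^ 2 / 2 + b ^ 2 / 8 + y + z ≤ (9 / 4) * (a ^ 2 / 2 + b ^ 2 / 8) := by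
  obtain ⟨hy₁, hy₂⟩ := abs_le.mp hy
  constructor
  · nlinarith [sq_nonneg (a / 2 - b / 4)]
  · nlinarith [sq_nonneg (2 * a - b / 2), sq_nonneg a]

theorem div_le_sqrt_of_sqrt_le {c L : ℝ} (hL : 0 < L) (hc : √c ≤ 4 * L) :
    c / (4 * L) ≤ √c := by
  rw [div_le_iff₀ (by positivity)]
  rcases le_or_gt c 0 with hc₀ | hc₀
  · nlinarith [sqrt_nonneg c]
  · calc c = √c * √c := (mul_self_sqrt hc₀.le).symm
      _ ≤ √c * (4 * L) := mul_le_mul_of_nonneg_left hc (sqrt_nonneg c)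

theorem lt_log_one_add_sq_of_sqrt_exp_sub_one_lt {t x : ℝ} (h : √(exp t - 1) < x) :
    t < log (1 + x ^ 2) := by
  have hx : exp t - 1 < x ^ 2 := lt_sq_of_sqrt_lt h
  rw [lt_log_iff_exp_lt (by positivity)]
  linarith

theorem self_le_sqrt_sq_add_sq (x y : ℝ) : x ≤ √(x ^ 2 + y ^ 2) :=
  le_sqrt_of_sq_le (by nlinarith [sq_nonneg y])

theorem log_one_add_sq_nonneg (x : ℝ) : 0 ≤ log (1 + x ^ 2) :=
  log_nonneg (by nlinarith [sq_nonneg x])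

section rho

variable {N : ℕ} (ξ : EuclideanSpace ℝ (Fin N))

theorem rho_nonneg : 0 ≤ rho ξ := by
  have hL := log_one_add_sq_nonneg ‖ξ‖
  unfold rho
  split_ifs <;> positivity

theorem four_mul_rho_le_sqrt : 4 * rho ξ ≤ √(log (1 + ‖ξ‖ ^ 2) ^ 2 + π ^ 2) := by
  set L := log (1 + ‖ξ‖ ^ 2)
  unfold rho
  split_ifs with h
  · linarith [self_le_sqrt_sq_add_sq L π]
  · have hLt : π / √3 < L := lt_log_one_add_sq_of_sqrt_exp_sub_one_lt (not_le.mp h)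
    have hL₀ : 0 < L := lt_trans (by positivity) hLt
    have hπ : π < √3 * L := by rwa [div_lt_iff₀' (by positivity)] at hLt
    have hπ₀ := pi_pos
    have h3 : √3 ^ 2 = 3 := sq_sqrt (by norm_num)
    have hsq : √(L ^ 2 + π ^ 2) ≤ 4 * L := by
      rw [sqrt_le_left (by positivity)]
      nlinarith
    calc 4 * (1 / 16 * (L ^ 2 + π ^ 2) / L) = (L ^ 2 + π ^ 2) / (4 * L) := by
          field_simp; ring
      _ ≤ √(L ^ 2 + π ^ 2) := div_le_sqrt_of_sqrt_le hL₀ hsq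

end rho

theorem abs_re_mul_conj_le (u v : ℂ) : |(v * starRingEnd ℂ u).re| ≤ ‖v‖ * ‖u‖ := by
  simpa only [norm_mul, Complex.norm_conj] using Complex.abs_re_le_norm (v * starRingEnd ℂ u)

theorem stmt_3_general (N : ℕ) (ξ : EuclideanSpace ℝ (Fin N)) (u v : ℂ)
    (E₀ E : ℝ)
    (hE₀ : E₀ = (1 / 2) * ‖v‖ ^ 2 + (1 / 8) * Real.log (1 + ‖ξ‖ ^ 2) ^ 2 * ‖u‖ ^ 2
      + (Real.pi ^ 2 / 8) * ‖u‖ ^ 2)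
    (hE : E = E₀ + rho ξ * (v * (starRingEnd ℂ) u).re
      + rho ξ * Real.log (1 + ‖ξ‖ ^ 2) * ‖u‖ ^ 2 / 2) :
    (1 / 2) * E₀ ≤ E ∧ E ≤ (9 / 4) * E₀ := by
  set L := log (1 + ‖ξ‖ ^ 2)
  set s := √(L ^ 2 + π ^ 2)
  have hs : s ^ 2 = L ^ 2 + π ^ 2 := sq_sqrt (by positivity)
  have hL₀ : 0 ≤ L := log_one_add_sq_nonneg ‖ξ‖
  have hLs : L ≤ s := self_le_sqrt_sq_add_sq L π
  have hρ₀ := rho_nonneg ξ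
  have hρs := four_mul_rho_le_sqrt ξ
  have hE₀' : E₀ = ‖v‖ ^ 2 / 2 + (s * ‖u‖) ^ 2 / 8 := by rw [hE₀, mul_pow, hs]; ring
  have hcross : |rho ξ * (v * starRingEnd ℂ u).re| ≤ ‖v‖ * (s * ‖u‖) / 4 := by
    rw [abs_mul, abs_of_nonneg hρ₀]
    calc rho ξ * |(v * starRingEnd ℂ u).re| ≤ (s / 4) * (‖v‖ * ‖u‖) :=
          mul_le_mul (by linarith) (abs_re_mul_conj_le u v) (abs_nonneg _) (by positivity)
      _ = ‖v‖ * (s * ‖u‖) / 4 := by ring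
  have hlast : rho ξ * L * ‖u‖ ^ 2 / 2 ≤ (s * ‖u‖) ^ 2 / 8 := by
    have : rho ξ * L ≤ (s / 4) * s := mul_le_mul (by linarith) hLs hL₀ (by positivity)
    nlinarith [sq_nonneg ‖u‖]
  rw [hE, hE₀']
  exact half_le_add_add_le_nine_div_four_mul hcross (by positivity) hlast

/-- Proposition: equivalence of the modified energy `E` and the natural energy `E₀`. -/
theorem stmt_3 (N : ℕ) (hN : 1 ≤ N) (ξ : EuclideanSpace ℝ (Fin N)) (u v : ℂ)
    (E₀ E : ℝ)
    (hE₀ : E₀ = (1 / 2) * ‖v‖ ^ 2 + (1 / 8) * Real.log (1 + ‖ξ‖ ^ 2) ^ 2 * ‖u‖ ^ 2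
      + (Real.pi ^ 2 / 8) * ‖u‖ ^ 2)
    (hE : E = E₀ + rho ξ * (v * (starRingEnd ℂ) u).re
      + rho ξ * Real.log (1 + ‖ξ‖ ^ 2) * ‖u‖ ^ 2 / 2) :
    (1 / 2) * E₀ ≤ E ∧ E ≤ (9 / 4) * E₀ :=
  stmt_3_general N ξ u v E₀ E hE₀ hE
end

section
/- Let N ≥ 1 and let u₁ : ℝ^N → ℂ be measurable with ‖u₁‖_{1,1} := ∫_{ℝ^N} (1 + |x|)|u₁(x)| dx < ∞. Define A(ξ) = ∫_{ℝ^N} u₁(x)(cos(⟨x,ξ⟩) - 1) dx, B(ξ) = ∫_{ℝ^N} u₁(x) sin(⟨x,ξ⟩) dx, and F₁(ξ,t) = (4/π)(A(ξ) - iB(ξ)) e^{-t log(1+|ξ|²)/2} sin(πt/4). Then there exist a constant C > 0 depending only on N and T > 0 such that for all t ≥ T: ∫_{|ξ| < 1} |F₁(ξ,t)|² dξ ≤ C ‖u₁‖_{1,1}² t^{-(N+2)/2}. -/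
/-!
Since `|cos s - 1| ≤ |s|` and `|sin s| ≤ |s|`, both `A(ξ)` and `B(ξ)` are bounded by
`|ξ| ‖u₁‖_{1,1}`, so `|F₁(ξ,t)|² ≲ ‖u₁‖²_{1,1} |ξ|² (1 + |ξ|²)^{-t}`. On the unit ball
`log (1 + |ξ|²) ≥ |ξ|² / 2`, and `y e^{-y} ≤ 1` trades the factor `|ξ|²` for `t⁻¹` at the price of
half the Gaussian decay: `|ξ|² e^{-t|ξ|²/2} ≤ (4/t) e^{-t|ξ|²/4}`. Integrating the remaining
Gaussian over all of `ℝ^N` gives `(4π/t)^{N/2}`.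
-/

open MeasureTheory Real

theorem Real.abs_cos_sub_one_le_abs (s : ℝ) : |cos s - 1| ≤ |s| := by
  simpa using abs_cos_sub_cos_le s 0

theorem norm_integral_mul_ofReal_inner_le {E : Type*} [NormedAddCommGroup E]
    [InnerProductSpace ℝ E] [MeasurableSpace E] {μ : Measure E} {u : E → ℂ}
    (hu : Integrable (fun x => (1 + ‖x‖) * ‖u x‖) μ) {g : ℝ → ℝ} (hg : ∀ s, |g s| ≤ |s|)
    (ξ : E) :
    ‖∫ x, u x * (g (inner ℝ x ξ) : ℂ) ∂μ‖ ≤ ‖ξ‖ * ∫ x, (1 + ‖x‖) * ‖u x‖ ∂μ := by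
  rw [← integral_const_mul]
  refine (norm_integral_le_integral_norm _).trans <| integral_mono_of_nonneg
    (.of_forall fun x => norm_nonneg _) (hu.const_mul _) (.of_forall fun x => ?_)
  have hgx : |g (inner ℝ x ξ)| ≤ ‖x‖ * ‖ξ‖ := (hg _).trans (abs_real_inner_le_norm x ξ)
  simp only [norm_mul, Complex.norm_real, Real.norm_eq_abs]
  nlinarith [mul_le_mul_of_nonneg_left hgx (norm_nonneg (u x)),
    mul_nonneg (norm_nonneg ξ) (norm_nonneg (u x))]

theorem norm_ofReal_mul_sub_I_mul_sq_le (c : ℝ) (a b : ℂ) (y θ : ℝ) :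
    ‖(c : ℂ) * (a - Complex.I * b) * (exp (y / 2) : ℂ) * (sin θ : ℂ)‖ ^ 2
      ≤ c ^ 2 * (‖a‖ + ‖b‖) ^ 2 * exp y := by
  have hab : ‖a - Complex.I * b‖ ≤ ‖a‖ + ‖b‖ := by
    simpa using norm_sub_le a (Complex.I * b)
  calc _ = (|c| * ‖a - Complex.I * b‖ * exp (y / 2) * |sin θ|) ^ 2 := by
        simp only [norm_mul, Complex.norm_real, Real.norm_eq_abs, abs_of_pos (exp_pos _)]
    _ ≤ (|c| * (‖a‖ + ‖b‖) * exp (y / 2) * 1) ^ 2 := by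
        gcongr
        exact abs_sin_le_one θ
    _ = c ^ 2 * (‖a‖ + ‖b‖) ^ 2 * exp y := by
        rw [mul_one, mul_pow, mul_pow, sq_abs, ← exp_nat_mul]
        ring_nf

theorem Real.half_le_log_one_add {s : ℝ} (hs₀ : 0 ≤ s) (hs₁ : s ≤ 1) :
    s / 2 ≤ log (1 + s) := by
  have hs : 0 < 1 + s := by linarith
  calc s / 2 ≤ s / (1 + s) := div_le_div_of_nonneg_left hs₀ hs (by linarith)
    _ = 1 - (1 + s)⁻¹ := by field_simp; ring
    _ ≤ log (1 + s) := one_sub_inv_le_log_of_pos hs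

theorem Real.mul_exp_neg_mul_log_one_add_le {r t : ℝ} (hr₀ : 0 ≤ r) (hr₁ : r ≤ 1)
    (ht : 0 < t) : r * exp (-(t * log (1 + r))) ≤ 4 / t * exp (-(t / 4) * r) := by
  have hlog : exp (-(t * log (1 + r))) ≤ exp (-(t / 4 * r)) * exp (-(t / 4 * r)) := by
    rw [← exp_add, exp_le_exp]
    nlinarith [mul_le_mul_of_nonneg_left (half_le_log_one_add hr₀ hr₁) ht.le]
  have hy : t / 4 * r * exp (-(t / 4 * r)) ≤ 1 :=
    (mul_exp_neg_le_exp_neg_one _).trans (exp_le_one_iff.2 (by norm_num))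
  calc r * exp (-(t * log (1 + r)))
      ≤ r * (exp (-(t / 4 * r)) * exp (-(t / 4 * r))) := by gcongr
    _ = 4 / t * (t / 4 * r * exp (-(t / 4 * r))) * exp (-(t / 4 * r)) := by field_simp
    _ ≤ 4 / t * 1 * exp (-(t / 4 * r)) := by gcongr
    _ = 4 / t * exp (-(t / 4) * r) := by rw [mul_one, neg_mul]

section Gaussian

variable {V : Type*} [NormedAddCommGroup V] [InnerProductSpace ℝ V] [FiniteDimensional ℝ V]
  [MeasurableSpace V] [BorelSpace V] {b : ℝ}

theorem integrable_exp_neg_mul_sq_norm (hb : 0 < b) :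
    Integrable (fun v : V => exp (-b * ‖v‖ ^ 2)) := by
  refine Integrable.of_integral_ne_zero ?_
  rw [GaussianFourier.integral_rexp_neg_mul_sq_norm hb]
  positivity

theorem setIntegral_exp_neg_mul_sq_norm_le (hb : 0 < b) (s : Set V) :
    ∫ v in s, exp (-b * ‖v‖ ^ 2) ≤ (π / b) ^ (Module.finrank ℝ V / 2 : ℝ) := by
  rw [← GaussianFourier.integral_rexp_neg_mul_sq_norm hb]
  exact setIntegral_le_integral (integrable_exp_neg_mul_sq_norm hb)
    (.of_forall fun v => (exp_pos _).le)

end Gaussian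

theorem Real.inv_mul_pi_div_rpow {t : ℝ} (ht : 0 < t) (d : ℝ) :
    t⁻¹ * (π / (t / 4)) ^ (d / 2) = (4 * π) ^ (d / 2) * t ^ (-(d + 2) / 2) := by
  rw [show π / (t / 4) = 4 * π / t by field_simp, div_rpow (by positivity) ht.le,
    show -(d + 2) / 2 = -1 + -(d / 2) by ring, rpow_add ht, rpow_neg_one, rpow_neg ht.le]
  ring

theorem stmt_13_general (N : ℕ)
    (u₁ : EuclideanSpace ℝ (Fin N) → ℂ)
    (hint : Integrable (fun x : EuclideanSpace ℝ (Fin N) => (1 + ‖x‖) * ‖u₁ x‖)) :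
    ∃ C > (0 : ℝ), ∃ T > (0 : ℝ), ∀ t : ℝ, T ≤ t →
      (∫ ξ in Metric.ball (0 : EuclideanSpace ℝ (Fin N)) 1,
        ‖((4 / Real.pi : ℝ) : ℂ)
          * ((∫ x, u₁ x * ((Real.cos (inner ℝ x ξ) - 1 : ℝ) : ℂ))
              - Complex.I * (∫ x, u₁ x * ((Real.sin (inner ℝ x ξ) : ℝ) : ℂ)))
          * (Real.exp (-(t * Real.log (1 + ‖ξ‖ ^ 2)) / 2) : ℂ)
          * (Real.sin (Real.pi * t / 4) : ℂ)‖ ^ 2)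
      ≤ C * (∫ x : EuclideanSpace ℝ (Fin N), (1 + ‖x‖) * ‖u₁ x‖) ^ 2
          * t ^ (-((N : ℝ) + 2) / 2) := by
  set M := ∫ x : EuclideanSpace ℝ (Fin N), (1 + ‖x‖) * ‖u₁ x‖
  refine ⟨256 / π ^ 2 * (4 * π) ^ ((N : ℝ) / 2), by positivity, 1, one_pos, fun t ht => ?_⟩
  have ht₀ : 0 < t := one_pos.trans_le ht
  have hb : 0 < t / 4 := by positivity
  calc _ ≤ ∫ ξ in Metric.ball (0 : EuclideanSpace ℝ (Fin N)) 1,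
          256 / π ^ 2 * M ^ 2 * t⁻¹ * exp (-(t / 4) * ‖ξ‖ ^ 2) := by
        refine integral_mono_of_nonneg (.of_forall fun ξ => by positivity)
          ((integrable_exp_neg_mul_sq_norm hb).const_mul _).restrict ?_
        filter_upwards [ae_restrict_mem measurableSet_ball] with ξ hξ
        have hξ : ‖ξ‖ ^ 2 ≤ 1 := by
          rw [mem_ball_zero_iff] at hξ
          nlinarith [norm_nonneg ξ]
        have hA := norm_integral_mul_ofReal_inner_le hint Real.abs_cos_sub_one_le_abs ξ
        have hB := norm_integral_mul_ofReal_inner_le hint (fun _ => abs_sin_le_abs) ξ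
        refine (norm_ofReal_mul_sub_I_mul_sq_le _ _ _ _ _).trans ?_
        calc _ ≤ (4 / π) ^ 2 * (‖ξ‖ * M + ‖ξ‖ * M) ^ 2 * exp (-(t * log (1 + ‖ξ‖ ^ 2))) := by
              gcongr
          _ = 64 / π ^ 2 * M ^ 2 * (‖ξ‖ ^ 2 * exp (-(t * log (1 + ‖ξ‖ ^ 2)))) := by ring
          _ ≤ 64 / π ^ 2 * M ^ 2 * (4 / t * exp (-(t / 4) * ‖ξ‖ ^ 2)) :=
              mul_le_mul_of_nonneg_left
                (mul_exp_neg_mul_log_one_add_le (by positivity) hξ ht₀) (by positivity)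
          _ = _ := by ring
    _ = 256 / π ^ 2 * M ^ 2 * t⁻¹ * ∫ ξ in Metric.ball (0 : EuclideanSpace ℝ (Fin N)) 1,
          exp (-(t / 4) * ‖ξ‖ ^ 2) := integral_const_mul _ _
    _ ≤ 256 / π ^ 2 * M ^ 2 * (t⁻¹ * (π / (t / 4)) ^ ((N : ℝ) / 2)) := by
        rw [mul_assoc]
        gcongr
        simpa using setIntegral_exp_neg_mul_sq_norm_le hb
          (Metric.ball (0 : EuclideanSpace ℝ (Fin N)) 1)
    _ = _ := by
        rw [inv_mul_pi_div_rpow ht₀]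
        ring

/-- Low-frequency estimate for `F₁`. -/
theorem stmt_13 (N : ℕ) (hN : 1 ≤ N)
    (u₁ : EuclideanSpace ℝ (Fin N) → ℂ)
    (hmeas : AEStronglyMeasurable u₁ volume)
    (hint : Integrable (fun x : EuclideanSpace ℝ (Fin N) => (1 + ‖x‖) * ‖u₁ x‖)) :
    ∃ C > (0 : ℝ), ∃ T > (0 : ℝ), ∀ t : ℝ, T ≤ t →
      (∫ ξ in Metric.ball (0 : EuclideanSpace ℝ (Fin N)) 1,
        ‖((4 / Real.pi : ℝ) : ℂ)
          * ((∫ x, u₁ x * ((Real.cos (inner ℝ x ξ) - 1 : ℝ) : ℂ))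
              - Complex.I * (∫ x, u₁ x * ((Real.sin (inner ℝ x ξ) : ℝ) : ℂ)))
          * (Real.exp (-(t * Real.log (1 + ‖ξ‖ ^ 2)) / 2) : ℂ)
          * (Real.sin (Real.pi * t / 4) : ℂ)‖ ^ 2)
      ≤ C * (∫ x : EuclideanSpace ℝ (Fin N), (1 + ‖x‖) * ‖u₁ x‖) ^ 2
          * t ^ (-((N : ℝ) + 2) / 2) :=
  stmt_13_general N u₁ hint
end
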